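/- For binary weights (w_j ∈ {0,1}) there exist N and a value b ∈ [0,1] such that the unbiased second-order estimator E_4 is strictly negative; equivalently, for all N ≥ 5 the threshold (N−1)²/(N(4N−6)) = 1/4 − (N−2)/(2N(4N−6)) is strictly less than 1/4, the maximum of a = b − b², so a choice of b making E_4 < 0 exists whenever N²a can be realized. -/

import Mathlib

/-!
Since `N^{\underline 2}/N = N - 1` and `(4N³ − 6N²)/N^{\underline 2} = N(4N − 6)/(N − 1)`, the estimator
factors as `E₄(a) = c · a · (t − a)` with `c > 0` and `t = (N − 1)²/(N(4N − 6))`. Hence `E₄(a) < 0`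
exactly when `a > t`, and `b = 1/2` gives `a = 1/4 > t` because `1/4 − t = (N − 2)/(2N(4N − 6)) > 0`.
-/

noncomputable def binaryE4 (N a : ℝ) : ℝ :=
  (1 / (N * (N - 1) * (N - 2) * (N - 3))) *
    ((N * (N - 1) / N) * a - ((4 * N ^ 3 - 6 * N ^ 2) / (N * (N - 1))) * a ^ 2)

noncomputable def e4Threshold (N : ℝ) : ℝ := (N - 1) ^ 2 / (N * (4 * N - 6))

theorem e4Threshold_eq {N : ℝ} (hN : N ≠ 0) (hN' : 4 * N - 6 ≠ 0) :
    e4Threshold N = 1 / 4 - (N - 2) / (2 * N * (4 * N - 6)) := by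
  unfold e4Threshold
  rw [eq_sub_iff_add_eq, div_add_div _ _ (by positivity) (by positivity),
    div_eq_iff (by positivity)]
  ring

theorem e4Threshold_lt_quarter {N : ℝ} (hN : 2 < N) : e4Threshold N < 1 / 4 := by
  rw [e4Threshold_eq (by positivity) (by linarith)]
  have : 0 < 4 * N - 6 := by linarith
  have : 0 < N - 2 := by linarith
  exact sub_lt_self _ (by positivity)

theorem binaryE4_eq_mul_threshold_sub {N : ℝ} (hN : 3 < N) (a : ℝ) :
    binaryE4 N a =
      a * (4 * N - 6) / ((N - 1) ^ 2 * (N - 2) * (N - 3)) * (e4Threshold N - a) := by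
  have : N ≠ 0 := by positivity
  have : N - 1 ≠ 0 := by linarith
  have : N - 2 ≠ 0 := by linarith
  have : N - 3 ≠ 0 := by linarith
  have : 4 * N - 6 ≠ 0 := by linarith
  unfold binaryE4 e4Threshold
  rw [eq_comm, div_mul_eq_mul_div, div_eq_iff (by positivity)]
  field_simp

theorem binaryE4_neg_iff {N a : ℝ} (hN : 3 < N) (ha : 0 < a) :
    binaryE4 N a < 0 ↔ e4Threshold N < a := by
  have : 0 < 4 * N - 6 := by linarith
  have : 0 < N - 1 := by linarith
  have : 0 < N - 2 := by linarith
  have : 0 < N - 3 := by linarith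
  rw [binaryE4_eq_mul_threshold_sub hN, ← smul_eq_mul,
    smul_neg_iff_of_pos_left (by positivity), sub_neg]

/-- For all `N ≥ 5` the threshold `(N−1)²/(N(4N−6))` equals
`1/4 − (N−2)/(2N(4N−6))` and is strictly less than `1/4`, the maximum of `a = b − b²`
on `[0,1]`; hence there exists `b ∈ [0,1]` for which the (binary-weight) estimator
`E₄(a) = (1/N^{\underline 4})((N^{\underline 2}/N)a − ((4N³−6N²)/N^{\underline 2})a²)`
is strictly negative. -/
theorem e4_negativity_exists (N : ℕ) (hN : 5 ≤ N) :
    let d2 : ℝ := (N : ℝ) * ((N : ℝ) - 1)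
    let d4 : ℝ := (N : ℝ) * ((N : ℝ) - 1) * ((N : ℝ) - 2) * ((N : ℝ) - 3)
    let E4 : ℝ → ℝ := fun a =>
      (1 / d4) * ((d2 / N) * a - ((4 * (N : ℝ) ^ 3 - 6 * (N : ℝ) ^ 2) / d2) * a ^ 2)
    (((N : ℝ) - 1) ^ 2 / ((N : ℝ) * (4 * (N : ℝ) - 6))
        = 1 / 4 - ((N : ℝ) - 2) / (2 * (N : ℝ) * (4 * (N : ℝ) - 6)))
    ∧ ((N : ℝ) - 1) ^ 2 / ((N : ℝ) * (4 * (N : ℝ) - 6)) < 1 / 4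
    ∧ ∃ b ∈ Set.Icc (0 : ℝ) 1, E4 (b - b ^ 2) < 0 := by
  intro d2 d4 E4
  have hN3 : (3 : ℝ) < N := by norm_cast; omega
  have hquarter : e4Threshold N < 1 / 4 := e4Threshold_lt_quarter (by linarith)
  refine ⟨e4Threshold_eq (by positivity) (by linarith), hquarter, 1 / 2, by norm_num, ?_⟩
  change binaryE4 N (1 / 2 - (1 / 2) ^ 2) < 0
  rw [binaryE4_neg_iff hN3 (by norm_num)]
  norm_num [hquarter]
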